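/- Let q be a power of an odd prime p and let Ä be the q²×q² matrix over F_{q²} whose rows are a_1 = w_1, …, a_{q²−1} = w_{q²−1}, a_{q²} = w_{q²} + ((p−1)/2) w_1, where w_i is the evaluation of X^{i−1} at all points of F_{q²}. Let σ be the permutation of {1,…,q²} such that the permutation matrix −Ä Ä^† corresponds to σ (i.e., ⟨a_i, a_{σ(i)}⟩_H = −1 for all i). For i = 1,…,q², let C_i ⊆ F_{q²}^m be a nonzero linear code of dimension k_i and minimum distance d_i such that C_{σ(i)}^{⊥H} ⊆ C_i for all i. Then the matrix-product code C = [C_1,…,C_{q²}]·Ä is a Hermitian dual-containing linear code over F_{q²} of length q²m and dimension Σ_{i=1}^{q²} k_i, with minimum distance d(C) ≥ min_{1 ≤ i ≤ q²} d_i (q² + 1 − i). -/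

import Mathlib

/-- Minimum distance (minimum Hamming weight of a nonzero element) of a set of vectors. -/
noncomputable def dminS {F : Type*} [DecidableEq F] [Zero F] {n : Type*} [Fintype n]
    (C : Set (n → F)) : ℕ :=
  sInf { w | ∃ c ∈ C, c ≠ 0 ∧ hammingNorm c = w }

/-- Euclidean dual of a set of vectors. -/
def dualE {F : Type*} [Field F] {n : Type*} [Fintype n] (C : Set (n → F)) : Set (n → F) :=
  { x | ∀ c ∈ C, ∑ j, x j * c j = 0 }

/-- Hermitian dual (with respect to x ↦ x^q) of a set of vectors over F_{q^2}. -/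
def dualH {F : Type*} [Field F] {n : Type*} [Fintype n] (q : ℕ) (C : Set (n → F)) :
    Set (n → F) :=
  { x | ∀ c ∈ C, ∑ j, x j * (c j) ^ q = 0 }

/-- The matrix-product code `[C_1,…,C_s]·A` as a set of vectors indexed by `Fin h × Fin m`. -/
def mpcSet {F : Type*} [Field F] {s h m : ℕ}
    (C : Fin s → Set (Fin m → F)) (A : Matrix (Fin s) (Fin h) F) :
    Set (Fin h × Fin m → F) :=
  { p | ∃ v : Fin s → Fin m → F, (∀ i, v i ∈ C i) ∧ ∀ x, p x = ∑ i, A i x.1 * v i x.2 }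

/-- A matrix is non-singular by columns. -/
def IsNSC {F : Type*} [Field F] {s h : ℕ} (A : Matrix (Fin s) (Fin h) F) : Prop :=
  ∀ (i : ℕ) (hi : i ≤ s), 0 < i → ∀ c : Fin i → Fin h, StrictMono c →
    (Matrix.of fun r t : Fin i => A (Fin.castLE hi r) (c t)).det ≠ 0

/-- Punctured code: projection of `C` onto the coordinates in `R`. -/
def punct {F : Type*} {n : Type*} (C : Set (n → F)) (R : Finset n) :
    Set ({x // x ∈ R} → F) :=
  (fun c (t : {x // x ∈ R}) => c t.1) '' C

/-- `R` is an (r,δ)-extended recovery set for coordinate `i` of the code `C`. -/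
def IsRecSet {F : Type*} [DecidableEq F] [Zero F] {n : Type*} [Fintype n]
    (C : Set (n → F)) (r δ : ℕ) (i : n) (R : Finset n) : Prop :=
  i ∈ R ∧ R.card ≤ r + δ - 1 ∧ δ ≤ dminS (punct C R)

/-- `C` is a locally recoverable code with locality (r,δ). -/
def IsLRC {F : Type*} [DecidableEq F] [Zero F] {n : Type*} [Fintype n]
    (C : Set (n → F)) (r δ : ℕ) : Prop :=
  ∀ i : n, ∃ R : Finset n, IsRecSet C r δ i R

/-- `wv α i` is the evaluation of the monomial `X^(i-1)` at all points of the field,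
enumerated by `α`. -/
def wv {F : Type*} [Field F] {q : ℕ} (α : Fin q ≃ F) (i : ℕ) : Fin q → F :=
  fun j => (α j) ^ (i - 1)

/-- `av α p i` : the vectors `a_i`, with `a_i = w_i` for `i < q` and
`a_q = w_q + ((p-1)/2) • w_1`. -/
def av {F : Type*} [Field F] {q : ℕ} (α : Fin q ≃ F) (p : ℕ) (i : ℕ) : Fin q → F :=
  if i = q then wv α q + (((p - 1) / 2 : ℕ) : F) • wv α 1 else wv α i

/-- The square matrix whose rows are `a_1, …, a_q`. -/
def Adot {F : Type*} [Field F] {q : ℕ} (α : Fin q ≃ F) (p : ℕ) : Matrix (Fin q) (Fin q) F :=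
  Matrix.of fun r j => av α p ((r : ℕ) + 1) j

/-!
The rows of `Ä` evaluate `1, X, …, X^(q²-2)` and `X^(q²-1) + (p-1)/2` on `F`. As `∑_{x ∈ F} x^e` is
`-1` if `e > 0` and `q² - 1 ∣ e`, and `0` otherwise, `⟨a_{i+1}, a_{ℓ+1}⟩_H` can only be nonzero when
`q² - 1 ∣ i + q ℓ`: the shift by `(p-1)/2 = -1/2` cancels the product of the last row with itself,
and since `q` is a unit modulo `q² - 1` every row then pairs nontrivially with exactly one row,
`a_{σ(i)}`. Writing `x ∈ C^{⊥H}` as `[u_1, …, u_{q²}]·Ä` and pairing `x` with the codewords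
`a_{σ(i)} ⊗ w`, `w ∈ C_{σ(i)}`, shows `u_i ∈ C_{σ(i)}^{⊥H} ⊆ C_i`.

The first `k` rows of `Ä` restricted to any `k` columns form a transposed Vandermonde matrix, up to
adding a multiple of the first row to the last, so `Ä` is non-singular by columns. It is therefore
invertible, which gives the dimension, and in a codeword `Σ a_i ⊗ v_i` whose last nonzero component
is `v_k`, each coordinate `t` with `v_k(t) ≠ 0` contributes at least `q² + 1 - k` nonzero entries.
-/

open Finset Matrix

lemma FiniteField.sum_pow_eq_ite {K : Type*} [Field K] [Fintype K] (e : ℕ) :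
    ∑ x : K, x ^ e = if e ≠ 0 ∧ Fintype.card K - 1 ∣ e then -1 else 0 := by
  classical
  rcases eq_or_ne e 0 with rfl | he
  · simp
  calc ∑ x : K, x ^ e = ∑ x ∈ univ.filter (· ≠ 0), x ^ e :=
        (sum_filter_of_ne fun x _ hx => by rintro rfl; exact hx (zero_pow he)).symm
    _ = ∑ x : {x : K // x ≠ 0}, (x : K) ^ e := sum_subtype _ (by simp) _
    _ = ∑ u : Kˣ, (u : K) ^ e :=
        (Equiv.sum_comp unitsEquivNeZero fun x : {x : K // x ≠ 0} => (x : K) ^ e).symm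
    _ = _ := by simp [FiniteField.sum_pow_units, he]

lemma FiniteField.sum_pow_of_lt_card {K : Type*} [Field K] [Fintype K] {i : ℕ}
    (hi : i < Fintype.card K) : ∑ x : K, x ^ i = if i = Fintype.card K - 1 then -1 else 0 := by
  have hK : 1 < Fintype.card K := Fintype.one_lt_card
  rw [FiniteField.sum_pow_eq_ite]
  congr 1
  refine propext ⟨fun ⟨hi0, hdvd⟩ => le_antisymm (by omega) (Nat.le_of_dvd (by omega) hdvd), ?_⟩
  rintro rfl
  exact ⟨by omega, dvd_rfl⟩

lemma two_mul_natCast_pred_div_two {F : Type*} [Ring F] {p : ℕ} [CharP F p] (hp : p.Prime)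
    (hodd : p ≠ 2) : 2 * (((p - 1) / 2 : ℕ) : F) = -1 := by
  have h2 : 2 * ((p - 1) / 2) = p - 1 :=
    Nat.two_mul_div_two_of_even (hp.even_sub_one hodd)
  rw [← Nat.cast_ofNat, ← Nat.cast_mul, h2, Nat.cast_sub hp.one_le, CharP.cast_eq_zero, zero_sub,
    Nat.cast_one]

lemma Nat.eq_of_dvd_add_mul {N q i ℓ ℓ' : ℕ} (hq : q.Coprime N) (hi : i ≤ N) (hℓ : ℓ ≤ N)
    (hℓ' : ℓ' ≤ N) (h : N ∣ i + q * ℓ ∧ ¬(i = 0 ∧ ℓ = 0) ∧ ¬(i = N ∧ ℓ = N))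
    (h' : N ∣ i + q * ℓ' ∧ ¬(i = 0 ∧ ℓ' = 0) ∧ ¬(i = N ∧ ℓ' = N)) : ℓ = ℓ' := by
  wlog hlt : ℓ < ℓ' generalizing ℓ ℓ'
  · rcases (not_lt.1 hlt).eq_or_lt with heq | hgt
    · exact heq.symm
    · exact (this hℓ' hℓ h' h hgt).symm
  exfalso
  have hdiff : N ∣ ℓ' - ℓ := by
    have := Nat.dvd_sub h'.1 h.1
    rw [Nat.add_sub_add_left, ← Nat.mul_sub] at this
    exact hq.symm.dvd_of_dvd_mul_left this
  obtain ⟨rfl, rfl⟩ : ℓ = 0 ∧ N = ℓ' := by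
    have := Nat.le_of_dvd (by omega) hdiff
    omega
  have hiN : N ∣ i := by simpa using h.1
  rcases hi.lt_or_eq with hlt | rfl
  · exact h.2.1 ⟨Nat.eq_zero_of_dvd_of_lt hiN hlt, rfl⟩
  · exact h'.2.2 ⟨rfl, rfl⟩

lemma Fin.sum_castLE_eq_sum {M : Type*} [AddCommMonoid M] {k s : ℕ} (hk : k ≤ s)
    (f : Fin s → M) (hf : ∀ i : Fin s, k ≤ i → f i = 0) :
    ∑ r : Fin k, f (Fin.castLE hk r) = ∑ i, f i := by
  have hmap := Finset.sum_map univ (Fin.castLEEmb hk) f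
  simp only [Fin.coe_castLEEmb] at hmap
  rw [← hmap]
  refine sum_subset (subset_univ _) fun i _ hi => hf i ?_
  by_contra! hik
  exact hi (mem_map.2 ⟨⟨i, hik⟩, mem_univ _, rfl⟩)

section MinimumDistance

variable {F : Type*} [DecidableEq F] [Zero F] {n : Type*} [Fintype n]

lemma dminS_le_hammingNorm {C : Set (n → F)} {c : n → F} (hc : c ∈ C) (hc0 : c ≠ 0) :
    dminS C ≤ hammingNorm c :=
  Nat.sInf_le ⟨c, hc, hc0, rfl⟩

lemma le_dminS {C : Set (n → F)} {b : ℕ} (hC : ∃ c ∈ C, c ≠ 0)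
    (h : ∀ c ∈ C, c ≠ 0 → b ≤ hammingNorm c) : b ≤ dminS C := by
  obtain ⟨c, hc, hc0⟩ := hC
  exact le_csInf ⟨_, c, hc, hc0, rfl⟩ fun _ ⟨c, hc, hc0, hw⟩ => hw ▸ h c hc hc0

lemma hammingNorm_eq_sum_hammingNorm {κ : Type*} [Fintype κ] (c : n × κ → F) :
    hammingNorm c = ∑ t, hammingNorm fun j => c (j, t) := by
  simp only [hammingNorm, card_filter]
  rw [Fintype.sum_prod_type, Finset.sum_comm]

end MinimumDistance

section MatrixProductCode

variable {F : Type*} [Field F] {s h m : ℕ}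

def mpcMap (A : Matrix (Fin s) (Fin h) F) (C : Fin s → Submodule F (Fin m → F)) :
    (∀ i, C i) →ₗ[F] (Fin h × Fin m → F) where
  toFun v x := ∑ i, A i x.1 * (v i : Fin m → F) x.2
  map_add' u v := by ext; simp [mul_add, sum_add_distrib]
  map_smul' a v := by ext; simp [mul_sum, mul_left_comm]

@[simp]
lemma mpcMap_apply (A : Matrix (Fin s) (Fin h) F) (C : Fin s → Submodule F (Fin m → F))
    (v : ∀ i, C i) (x : Fin h × Fin m) :
    mpcMap A C v x = ∑ i, A i x.1 * (v i : Fin m → F) x.2 := rfl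

lemma coe_range_mpcMap (A : Matrix (Fin s) (Fin h) F) (C : Fin s → Submodule F (Fin m → F)) :
    (LinearMap.range (mpcMap A C) : Set (Fin h × Fin m → F)) =
      mpcSet (fun i => (C i : Set (Fin m → F))) A := by
  ext c
  constructor
  · rintro ⟨v, rfl⟩
    exact ⟨fun i => v i, fun i => (v i).2, fun x => rfl⟩
  · rintro ⟨v, hv, hc⟩
    exact ⟨fun i => ⟨v i, hv i⟩, funext fun x => (hc x).symm⟩

lemma mpcMap_injective {A : Matrix (Fin s) (Fin s) F} (hA : A.det ≠ 0)
    (C : Fin s → Submodule F (Fin m → F)) : Function.Injective (mpcMap A C) := by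
  refine (injective_iff_map_eq_zero _).2 fun v hv => funext fun i => Subtype.ext <| funext fun t => ?_
  have hvt : (fun i => (v i : Fin m → F) t) ᵥ* A = 0 := funext fun j => by
    simpa [vecMul, dotProduct, mul_comm] using congrFun hv (j, t)
  exact congrFun (eq_zero_of_vecMul_eq_zero hA hvt) i

lemma finrank_range_mpcMap {A : Matrix (Fin s) (Fin s) F} (hA : A.det ≠ 0)
    (C : Fin s → Submodule F (Fin m → F)) :
    Module.finrank F (LinearMap.range (mpcMap A C)) = ∑ i, Module.finrank F (C i) := by
  rw [LinearMap.finrank_range_of_inj (mpcMap_injective hA C), Module.finrank_pi_fintype]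

lemma mpcMap_single (A : Matrix (Fin s) (Fin h) F)
    (C : Fin s → Submodule F (Fin m → F)) (i : Fin s) (w : C i) :
    mpcMap A C (Pi.single i w) = fun x => A i x.1 * (w : Fin m → F) x.2 := by
  ext x
  rw [mpcMap_apply, sum_eq_single i (fun j _ hj => by simp [Pi.single_eq_of_ne hj]) (by simp)]
  simp

lemma exists_eq_sum_mul {A : Matrix (Fin s) (Fin s) F} (hA : A.det ≠ 0)
    (x : Fin s × Fin m → F) : ∃ u : Fin s → Fin m → F, ∀ j t, x (j, t) = ∑ i, A i j * u i t := by
  refine ⟨fun i t => ((fun j => x (j, t)) ᵥ* A⁻¹) i, fun j t => ?_⟩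
  have hinv : ((fun j => x (j, t)) ᵥ* A⁻¹) ᵥ* A = fun j => x (j, t) := by
    rw [vecMul_vecMul, nonsing_inv_mul _ hA.isUnit, vecMul_one]
  simpa [vecMul, dotProduct, mul_comm] using (congrFun hinv j).symm

lemma sum_sum_mul_mul_pow_eq_sum_mul_sum (q : ℕ) (A : Matrix (Fin s) (Fin h) F) (u : Fin s → Fin m → F)
    (ℓ : Fin s) (w : Fin m → F) :
    ∑ y : Fin h × Fin m, (∑ i, A i y.1 * u i y.2) * (A ℓ y.1 * w y.2) ^ q =
      ∑ i, (∑ j, A i j * A ℓ j ^ q) * ∑ t, u i t * w t ^ q := by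
  simp only [Fintype.sum_prod_type, Finset.sum_mul, Finset.mul_sum, mul_pow]
  calc _ = ∑ j, ∑ i, ∑ t, A i j * A ℓ j ^ q * (u i t * w t ^ q) :=
        Finset.sum_congr rfl fun j _ => by
          rw [Finset.sum_comm]
          exact Finset.sum_congr rfl fun i _ => Finset.sum_congr rfl fun t _ => by ring
    _ = ∑ i, ∑ j, ∑ t, A i j * A ℓ j ^ q * (u i t * w t ^ q) := Finset.sum_comm
    _ = _ := Finset.sum_congr rfl fun i _ => Finset.sum_comm

lemma dualH_mpcSet_subset (q : ℕ)
    {A : Matrix (Fin s) (Fin s) F} (hA : A.det ≠ 0) (σ : Equiv.Perm (Fin s))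
    (hgram : ∀ i ℓ, ℓ ≠ σ i → ∑ j, A i j * A ℓ j ^ q = 0)
    (hgramσ : ∀ i, ∑ j, A i j * A (σ i) j ^ q ≠ 0) {C : Fin s → Submodule F (Fin m → F)}
    (hdual : ∀ i, dualH q (C (σ i) : Set (Fin m → F)) ⊆ C i) :
    dualH q (mpcSet (fun i => (C i : Set (Fin m → F))) A) ⊆
      mpcSet (fun i => (C i : Set (Fin m → F))) A := by
  intro x hx
  obtain ⟨u, hu⟩ := exists_eq_sum_mul hA x
  refine ⟨u, fun i => hdual i fun w hw => ?_, fun y => hu y.1 y.2⟩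
  have hc : (fun y : Fin s × Fin m => A (σ i) y.1 * w y.2) ∈
      mpcSet (fun i => (C i : Set (Fin m → F))) A := by
    rw [← coe_range_mpcMap, ← mpcMap_single A C (σ i) ⟨w, hw⟩]
    exact LinearMap.mem_range_self _ _
  have h0 := hx _ hc
  rw [show x = fun y => ∑ i, A i y.1 * u i y.2 from funext fun y => hu y.1 y.2,
    sum_sum_mul_mul_pow_eq_sum_mul_sum, sum_eq_single i (fun i' _ hi' => by
      rw [hgram i' (σ i) (σ.injective.ne hi').symm, zero_mul]) (by simp)] at h0
  exact (mul_eq_zero.1 h0).resolve_left (hgramσ i)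

end MatrixProductCode

section NonsingularByColumns

variable {F : Type*} [Field F] {s h : ℕ}

lemma IsNSC.det_ne_zero {A : Matrix (Fin s) (Fin s) F} (hA : IsNSC A) : A.det ≠ 0 := by
  rcases Nat.eq_zero_or_pos s with rfl | hs
  · simp
  · exact hA s le_rfl hs id strictMono_id

lemma IsNSC.sub_le_hammingNorm_vecMul [DecidableEq F] {A : Matrix (Fin s) (Fin h) F}
    (hA : IsNSC A) {u : Fin s → F} {k : Fin s} (hk : u k ≠ 0) (hu : ∀ i, k < i → u i = 0) :
    h - k ≤ hammingNorm (u ᵥ* A) := by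
  by_contra! hlt
  have hzeros : (k : ℕ) + 1 ≤ #{j | (u ᵥ* A) j = 0} := by
    have := card_filter_add_card_filter_not (s := univ) (p := fun j => (u ᵥ* A) j ≠ 0)
    simp only [not_not, card_univ, Fintype.card_fin] at this
    simp only [hammingNorm] at hlt
    omega
  obtain ⟨Z, hZ, hZcard⟩ := exists_subset_card_eq hzeros
  set c := Z.orderEmbOfFin hZcard
  have hvec : (fun r => u (Fin.castLE k.isLt r)) ᵥ*
      Matrix.of (fun r t : Fin (k + 1) => A (Fin.castLE k.isLt r) (c t)) = 0 := by
    funext t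
    have hct : (u ᵥ* A) (c t) = 0 := (mem_filter.1 (hZ (Z.orderEmbOfFin_mem hZcard t))).2
    rw [Pi.zero_apply, ← hct]
    simp only [vecMul, dotProduct, of_apply]
    exact Fin.sum_castLE_eq_sum _ (fun i => u i * A i (c t))
      fun i hi => by rw [hu i (by rw [Fin.lt_def]; omega), zero_mul]
  have := congrFun (eq_zero_of_vecMul_eq_zero
    (hA (k + 1) k.isLt k.succ_pos c c.strictMono) hvec) (Fin.last k)
  rw [show Fin.castLE k.isLt (Fin.last k) = k from Fin.ext rfl] at this
  exact hk this

lemma IsNSC.exists_dminS_mul_le_hammingNorm [DecidableEq F] {m : ℕ}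
    {A : Matrix (Fin s) (Fin h) F} (hA : IsNSC A) {C : Fin s → Submodule F (Fin m → F)}
    {c : Fin h × Fin m → F} (hc : c ∈ mpcSet (fun i => (C i : Set (Fin m → F))) A)
    (hc0 : c ≠ 0) : ∃ i : Fin s, dminS (C i : Set (Fin m → F)) * (h - i) ≤ hammingNorm c := by
  obtain ⟨v, hv, hcv⟩ := hc
  have hsupp : ({i | v i ≠ 0} : Finset (Fin s)).Nonempty := by
    by_contra! hempty
    refine hc0 (funext fun x => ?_)
    simp_all [filter_eq_empty_iff]
  obtain ⟨k, hk, hkmax⟩ := exists_max_image _ id hsupp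
  have hvk : v k ≠ 0 := (mem_filter.1 hk).2
  have hvz : ∀ i, k < i → v i = 0 := fun i hki => by
    by_contra hi
    exact (hkmax i (mem_filter.2 ⟨mem_univ _, hi⟩)).not_gt hki
  have hcol : ∀ t, (fun j => c (j, t)) = (fun i => v i t) ᵥ* A := fun t => funext fun j => by
    simp [hcv, vecMul, dotProduct, mul_comm]
  refine ⟨k, ?_⟩
  calc dminS (C k : Set (Fin m → F)) * (h - k) ≤ hammingNorm (v k) * (h - k) :=
        Nat.mul_le_mul_right _ (dminS_le_hammingNorm (hv k) hvk)
    _ = ∑ t ∈ {t | v k t ≠ 0}, (h - k) := by simp [hammingNorm]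
    _ ≤ ∑ t ∈ {t | v k t ≠ 0}, hammingNorm fun j => c (j, t) :=
        sum_le_sum fun t ht => hcol t ▸
          hA.sub_le_hammingNorm_vecMul (mem_filter.1 ht).2 fun i hi => by rw [hvz i hi]; rfl
    _ ≤ ∑ t, hammingNorm fun j => c (j, t) := sum_le_sum_of_subset (filter_subset _ _)
    _ = hammingNorm c := (hammingNorm_eq_sum_hammingNorm c).symm

end NonsingularByColumns

section Adot

variable {F : Type*} [Field F] {Q : ℕ} (α : Fin Q ≃ F) (p : ℕ)

lemma Adot_apply (i j : Fin Q) :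
    Adot α p i j = α j ^ (i : ℕ) + if (i : ℕ) = Q - 1 then (((p - 1) / 2 : ℕ) : F) else 0 := by
  have hlast : (i : ℕ) + 1 = Q ↔ (i : ℕ) = Q - 1 := by omega
  simp only [Adot, of_apply, av, hlast]
  split_ifs with hi
  · simp [wv, hi]
  · simp [wv]

lemma isNSC_Adot (hQ : 2 ≤ Q) : IsNSC (Adot α p) := by
  intro t ht htpos c hc
  set V : Matrix (Fin t) (Fin t) F := (vandermonde fun s => α (c s))ᵀ
  have hV : V.det ≠ 0 := by
    rw [det_transpose]
    exact det_vandermonde_ne_zero_iff.2 (α.injective.comp hc.injective)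
  rcases ht.lt_or_eq with hlt | rfl
  · convert hV using 2
    ext r s
    have hr : (r : ℕ) ≠ Q - 1 := by omega
    simp [Adot_apply, V, hr]
  -- With all rows present, the last row is a Vandermonde row plus `(p-1)/2` times the first.
  · set L : Fin t := ⟨t - 1, by omega⟩
    set Z : Fin t := ⟨0, htpos⟩
    have hLZ : L ≠ Z := fun h => by simp [L, Z, Fin.ext_iff] at h; omega
    convert hV using 1
    rw [← det_updateRow_add_smul_self V hLZ (((p - 1) / 2 : ℕ) : F)]
    congr 1
    ext r s
    by_cases hr : r = L
    · subst hr
      simp [Adot_apply, V, L, Z]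
    · have hr' : (r : ℕ) ≠ t - 1 := fun h => hr (Fin.ext h)
      simp [Adot_apply, V, hr, hr']

end Adot

section Gram

variable {F : Type*} [Field F] [Fintype F] {Q : ℕ} (α : Fin Q ≃ F) {p : ℕ} [Fact p.Prime]
  [CharP F p]

lemma sum_Adot_mul_Adot_pow (hodd : p ≠ 2) (n : ℕ) (hQ : Fintype.card F = Q) (i ℓ : Fin Q) :
    ∑ j, Adot α p i j * Adot α p ℓ j ^ p ^ n =
      ∑ x : F, x ^ ((i : ℕ) + p ^ n * ℓ) +
        if (i : ℕ) = Q - 1 ∧ (ℓ : ℕ) = Q - 1 then 1 else 0 := by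
  set c : F := (((p - 1) / 2 : ℕ) : F)
  set ci : F := if (i : ℕ) = Q - 1 then c else 0
  set cℓ : F := if (ℓ : ℕ) = Q - 1 then c else 0
  have hcℓ : cℓ ^ p ^ n = cℓ := by
    have hc : c ^ p ^ n = c := by
      simpa only [iterateFrobenius_def] using map_natCast (iterateFrobenius F p n) ((p - 1) / 2)
    simp only [cℓ]
    split_ifs <;> simp [hc, Fact.out (p := p.Prime) |>.ne_zero]
  have hfrob : ∑ x : F, (x ^ p ^ n) ^ (ℓ : ℕ) = ∑ x : F, x ^ (ℓ : ℕ) := by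
    simpa [iterateFrobenius_def] using
      Equiv.sum_comp (iterateFrobeniusEquiv F p n).toEquiv fun x => x ^ (ℓ : ℕ)
  calc ∑ j, Adot α p i j * Adot α p ℓ j ^ p ^ n
      = ∑ x : F, (x ^ (i : ℕ) + ci) * (x ^ (ℓ : ℕ) + cℓ) ^ p ^ n :=
        Equiv.sum_comp α (fun x => (x ^ (i : ℕ) + ci) * (x ^ (ℓ : ℕ) + cℓ) ^ p ^ n) ▸
          Finset.sum_congr rfl fun j _ => by simp only [Adot_apply]; rfl
    _ = ∑ x : F, (x ^ ((i : ℕ) + p ^ n * ℓ) + cℓ * x ^ (i : ℕ) + ci * (x ^ p ^ n) ^ (ℓ : ℕ)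
          + ci * cℓ) := Finset.sum_congr rfl fun x _ => by
        rw [add_pow_char_pow, hcℓ, pow_add, pow_mul, ← pow_mul, ← pow_mul, mul_comm (ℓ : ℕ)]
        ring
    _ = ∑ x : F, x ^ ((i : ℕ) + p ^ n * ℓ) + cℓ * ∑ x : F, x ^ (i : ℕ)
          + ci * ∑ x : F, x ^ (ℓ : ℕ) := by
        rw [sum_add_distrib, sum_add_distrib, sum_add_distrib, ← mul_sum, ← mul_sum, hfrob,
          sum_const, card_univ, nsmul_eq_mul, FiniteField.cast_card_eq_zero, zero_mul, add_zero]
    _ = _ := by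
        rw [FiniteField.sum_pow_of_lt_card (i := i) (hQ ▸ i.isLt),
          FiniteField.sum_pow_of_lt_card (i := ℓ) (hQ ▸ ℓ.isLt), hQ]
        -- Each cross term is `-(p-1)/2` when both rows are the last one, and `0` otherwise.
        have h2c := two_mul_natCast_pred_div_two (F := F) (Fact.out (p := p.Prime)) hodd
        by_cases hi : (i : ℕ) = Q - 1 <;> by_cases hl : (ℓ : ℕ) = Q - 1 <;>
          simp [ci, cℓ, hi, hl]
        linear_combination -h2c

lemma dvd_of_sum_Adot_mul_Adot_pow_ne_zero (hodd : p ≠ 2) (n : ℕ) (hQ : Fintype.card F = Q)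
    {i ℓ : Fin Q} (h : ∑ j, Adot α p i j * Adot α p ℓ j ^ p ^ n ≠ 0) :
    Q - 1 ∣ (i : ℕ) + p ^ n * ℓ ∧ ¬((i : ℕ) = 0 ∧ (ℓ : ℕ) = 0) ∧
      ¬((i : ℕ) = Q - 1 ∧ (ℓ : ℕ) = Q - 1) := by
  have hQ2 : 1 < Q := hQ ▸ Fintype.one_lt_card
  rw [sum_Adot_mul_Adot_pow α hodd n hQ, FiniteField.sum_pow_eq_ite, hQ] at h
  by_cases hlast : (i : ℕ) = Q - 1 ∧ (ℓ : ℕ) = Q - 1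
  · refine absurd ?_ h
    rw [if_pos hlast, if_pos ⟨by omega, ⟨1 + p ^ n, by rw [hlast.1, hlast.2]; ring⟩⟩]
    ring
  · rw [if_neg hlast, add_zero, ne_eq, ite_eq_right_iff, not_forall] at h
    obtain ⟨⟨hne, hdvd⟩, -⟩ := h
    exact ⟨hdvd, fun h0 => hne (by simp [h0]), hlast⟩

lemma sum_Adot_mul_Adot_pow_eq_zero_of_ne (hodd : p ≠ 2) (n : ℕ) (hQ : Fintype.card F = Q)
    {i ℓ ℓ' : Fin Q} (h' : ∑ j, Adot α p i j * Adot α p ℓ' j ^ p ^ n ≠ 0) (hne : ℓ ≠ ℓ') :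
    ∑ j, Adot α p i j * Adot α p ℓ j ^ p ^ n = 0 := by
  by_contra h
  have hpQ : p ∣ Q := hQ ▸ (CharP.cast_eq_zero_iff F p _).1 (FiniteField.cast_card_eq_zero F)
  have hcop : (p ^ n).Coprime (Q - 1) :=
    (((Nat.coprime_self_sub_right (hQ ▸ Fintype.card_pos)).2 (Nat.coprime_one_right Q)
      ).coprime_dvd_left hpQ).pow_left n
  exact hne <| Fin.ext <| Nat.eq_of_dvd_add_mul hcop (by omega) (by omega) (by omega)
    (dvd_of_sum_Adot_mul_Adot_pow_ne_zero α hodd n hQ h)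
    (dvd_of_sum_Adot_mul_Adot_pow_ne_zero α hodd n hQ h')

end Gram

theorem stmt11_general {F : Type*} [Field F] [Fintype F] [DecidableEq F] {p n q m : ℕ}
    (hp : p.Prime) (hodd : p ≠ 2) (hq : q = p ^ n)
    (hcard : Fintype.card F = q ^ 2)
    (α : Fin (q ^ 2) ≃ F)
    (σ : Equiv.Perm (Fin (q ^ 2)))
    (hσ : ∀ i : Fin (q ^ 2), ∑ t, Adot α p i t * (Adot α p (σ i) t) ^ q = -1)
    (C : Fin (q ^ 2) → Submodule F (Fin m → F)) (k d : Fin (q ^ 2) → ℕ)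
    (hnz : ∀ i, C i ≠ ⊥)
    (hk : ∀ i, Module.finrank F (C i) = k i)
    (hd : ∀ i, dminS ((C i : Set (Fin m → F))) = d i)
    (hdual : ∀ i : Fin (q ^ 2),
      dualH q ((C (σ i) : Set (Fin m → F))) ⊆ (C i : Set (Fin m → F))) :
    ∃ S : Submodule F (Fin (q ^ 2) × Fin m → F),
      (S : Set (Fin (q ^ 2) × Fin m → F)) =
        mpcSet (fun i => (C i : Set (Fin m → F))) (Adot α p) ∧
      dualH q (S : Set (Fin (q ^ 2) × Fin m → F)) ⊆ (S : Set (Fin (q ^ 2) × Fin m → F)) ∧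
      Module.finrank F S = ∑ i, k i ∧
      sInf { v | ∃ i : Fin (q ^ 2), v = d i * (q ^ 2 - (i : ℕ)) } ≤
        dminS ((S : Set (Fin (q ^ 2) × Fin m → F))) := by
  subst hq
  have : Fact p.Prime := ⟨hp⟩
  have : CharP F p := charP_of_card_eq_prime_pow (hcard.trans (pow_mul p n 2).symm)
  have hA : IsNSC (Adot α p) := isNSC_Adot α p (hcard ▸ Fintype.one_lt_card)
  have hS := coe_range_mpcMap (Adot α p) C
  have hσ0 (i) : ∑ t, Adot α p i t * Adot α p (σ i) t ^ p ^ n ≠ 0 := by simp [hσ i]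
  refine ⟨LinearMap.range (mpcMap (Adot α p) C), hS, ?_, ?_, ?_⟩
  · rw [hS]
    exact dualH_mpcSet_subset _ hA.det_ne_zero σ
      (fun i ℓ hℓ => sum_Adot_mul_Adot_pow_eq_zero_of_ne α hodd n hcard (hσ0 i) hℓ) hσ0 hdual
  · rw [finrank_range_mpcMap hA.det_ne_zero]
    exact Finset.sum_congr rfl fun i _ => hk i
  · obtain ⟨z, hz, hz0⟩ := Submodule.exists_mem_ne_zero_of_ne_bot (hnz (α.symm 0))
    refine le_dminS ⟨_, LinearMap.mem_range_self _ (Pi.single (α.symm 0) ⟨z, hz⟩), ?_⟩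
      fun c hc hc0 => ?_
    · rw [ne_eq, (mpcMap_injective hA.det_ne_zero C).eq_iff' (map_zero _)]
      simpa [Subtype.ext_iff] using hz0
    · obtain ⟨i, hi⟩ := hA.exists_dminS_mul_le_hammingNorm (hS ▸ hc) hc0
      exact le_trans (Nat.sInf_le ⟨i, rfl⟩) (hd i ▸ hi)

/-- if `σ` is the permutation with `⟨a_i, a_{σ(i)}⟩_H = -1` and
`C_{σ(i)}^{⊥H} ⊆ C_i` for all `i`, then `[C_1,…,C_{q²}]·Ä` is Hermitian dual-containing,
of length `q²m`, dimension `Σ k_i` and minimum distance at least `min_i d_i (q² + 1 - i)`. -/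
theorem stmt11 {F : Type*} [Field F] [Fintype F] [DecidableEq F] {p n q m : ℕ}
    (hp : p.Prime) (hodd : p ≠ 2) (hn : 0 < n) (hq : q = p ^ n)
    (hcard : Fintype.card F = q ^ 2) (hpos : 0 < q ^ 2)
    (α : Fin (q ^ 2) ≃ F) (h0 : α ⟨0, hpos⟩ = 0)
    (σ : Equiv.Perm (Fin (q ^ 2)))
    (hσ : ∀ i : Fin (q ^ 2), ∑ t, Adot α p i t * (Adot α p (σ i) t) ^ q = -1)
    (C : Fin (q ^ 2) → Submodule F (Fin m → F)) (k d : Fin (q ^ 2) → ℕ)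
    (hnz : ∀ i, C i ≠ ⊥)
    (hk : ∀ i, Module.finrank F (C i) = k i)
    (hd : ∀ i, dminS ((C i : Set (Fin m → F))) = d i)
    (hdual : ∀ i : Fin (q ^ 2),
      dualH q ((C (σ i) : Set (Fin m → F))) ⊆ (C i : Set (Fin m → F))) :
    ∃ S : Submodule F (Fin (q ^ 2) × Fin m → F),
      (S : Set (Fin (q ^ 2) × Fin m → F)) =
        mpcSet (fun i => (C i : Set (Fin m → F))) (Adot α p) ∧
      dualH q (S : Set (Fin (q ^ 2) × Fin m → F)) ⊆ (S : Set (Fin (q ^ 2) × Fin m → F)) ∧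
      Module.finrank F S = ∑ i, k i ∧
      sInf { v | ∃ i : Fin (q ^ 2), v = d i * (q ^ 2 - (i : ℕ)) } ≤
        dminS ((S : Set (Fin (q ^ 2) × Fin m → F))) :=
  stmt11_general hp hodd hq hcard α σ hσ C k d hnz hk hd hdual
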